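/- In an e-ring, for projections p,q the following are equivalent: (i) pq ∈ P; (ii) pq ∈ E; (iii) pq = qp; (iv) pq = pqp. Moreover, if these hold then pq is the infimum of p and q in E. -/

import Mathlib

/-- An e-ring: an associative unital ring `R` together with a set `E` of effects.
`E⁺` is the additive submonoid generated by `E` (the set of finite sums of effects). -/
structure ERing (R : Type*) [Ring R] where
  E : Set R
  zero_mem : (0:R) ∈ E
  one_mem : (1:R) ∈ E
  compl_mem : ∀ e ∈ E, 1 - e ∈ E
  ax_i : ∀ a ∈ AddSubmonoid.closure E, -a ∈ AddSubmonoid.closure E → a = 0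
  ax_ii : ∀ a ∈ AddSubmonoid.closure E, 1 - a ∈ AddSubmonoid.closure E → a ∈ E
  ax_iii : ∀ a ∈ AddSubmonoid.closure E, ∀ b ∈ AddSubmonoid.closure E,
    a * b = b * a → a * b ∈ AddSubmonoid.closure E
  ax_iv : ∀ a ∈ AddSubmonoid.closure E, ∀ b ∈ AddSubmonoid.closure E,
    a * b * a ∈ AddSubmonoid.closure E
  ax_v : ∀ a ∈ AddSubmonoid.closure E, ∀ b ∈ AddSubmonoid.closure E,
    a * b * a = 0 → a * b = 0 ∧ b * a = 0
  ax_vi : ∀ a ∈ AddSubmonoid.closure E, ∀ b ∈ AddSubmonoid.closure E,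
    (a - b) * (a - b) ∈ AddSubmonoid.closure E

namespace ERing

variable {R : Type*} [Ring R]

/-- The positive cone `E⁺`: all finite sums of effects. -/
def Ep (S : ERing R) : Set R := (AddSubmonoid.closure S.E : Set R)

/-- The directed group `G = E⁺ − E⁺` (as a subset of `R`). -/
def G (S : ERing R) : Set R := {x | ∃ a ∈ S.Ep, ∃ b ∈ S.Ep, x = a - b}

/-- The partial order with positive cone `E⁺`: `g ≤ h` iff `h − g ∈ E⁺`. -/
def le (S : ERing R) (g h : R) : Prop := h - g ∈ S.Ep

/-- The set of projections: idempotent elements of `G`. -/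
def P (S : ERing R) : Set R := {p | p ∈ S.G ∧ p * p = p}

end ERing

/-
Projections `p` and their complements `1 - p` are positive. If `b ≥ 0` and
`(1 - p) b (1 - p) = 0`, axiom (v) gives `p b = b = b p`; this applies when `0 ≤ b ≤ p`, since
`(1 - p) b (1 - p)` is then both positive and negative. If `pq ≥ 0`, it yields `pqp = pq = qpq`,
so `pq` and `a = q - pq` are projections with `a p a = 0`, whence `a p = 0`, i.e. `qp = pqp = pq`.
Conversely, if `pq = qp` then `p - pq = p (1 - q) p ≥ 0`, so `1 - pq = (1 - p) + (p - pq) ≥ 0`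
and `pq ∈ E`; and `0 ≤ e ≤ p, q` gives `pq - e = p (q - e) p ≥ 0`.
-/

namespace ERing

variable {R : Type*} [Ring R] (S : ERing R) {p q a b e : R}

lemma mem_Ep_of_mem_E (he : e ∈ S.E) : e ∈ S.Ep := AddSubmonoid.subset_closure he

lemma add_mem_Ep (ha : a ∈ S.Ep) (hb : b ∈ S.Ep) : a + b ∈ S.Ep :=
  AddSubmonoid.add_mem _ ha hb

lemma mem_G_of_mem_Ep (ha : a ∈ S.Ep) : a ∈ S.G :=
  ⟨a, ha, 0, AddSubmonoid.zero_mem _, (sub_zero a).symm⟩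

lemma sub_mem_G (ha : a ∈ S.G) (hb : b ∈ S.G) : a - b ∈ S.G := by
  obtain ⟨a₁, ha₁, a₂, ha₂, rfl⟩ := ha
  obtain ⟨b₁, hb₁, b₂, hb₂, rfl⟩ := hb
  exact ⟨a₁ + b₂, S.add_mem_Ep ha₁ hb₂, a₂ + b₁, S.add_mem_Ep ha₂ hb₁, by abel⟩

lemma isIdempotentElem_of_mem_P (hp : p ∈ S.P) : IsIdempotentElem p := hp.2

lemma mem_Ep_of_mem_P (hp : p ∈ S.P) : p ∈ S.Ep := by
  obtain ⟨⟨a, ha, b, hb, rfl⟩, hpp⟩ := hp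
  have h := S.ax_vi a ha b hb
  rwa [hpp] at h

lemma one_sub_mem_P (hp : p ∈ S.P) : 1 - p ∈ S.P :=
  ⟨S.sub_mem_G (S.mem_G_of_mem_Ep (S.mem_Ep_of_mem_E S.one_mem)) hp.1,
    (S.isIdempotentElem_of_mem_P hp).one_sub⟩

lemma mem_E_of_mem_P (hp : p ∈ S.P) : p ∈ S.E :=
  S.ax_ii p (S.mem_Ep_of_mem_P hp) (S.mem_Ep_of_mem_P (S.one_sub_mem_P hp))

lemma mul_eq_self_of_compl_sandwich_eq_zero (hp : p ∈ S.P) (hb : b ∈ S.Ep)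
    (h : (1 - p) * b * (1 - p) = 0) : p * b = b ∧ b * p = b := by
  obtain ⟨h₁, h₂⟩ := S.ax_v _ (S.mem_Ep_of_mem_P (S.one_sub_mem_P hp)) b hb h
  rw [sub_mul, one_mul, sub_eq_zero] at h₁
  rw [mul_sub, mul_one, sub_eq_zero] at h₂
  exact ⟨h₁.symm, h₂.symm⟩

lemma mul_right_eq_self_of_mul_left_eq_self (hp : p ∈ S.P) (hb : b ∈ S.Ep) (h : p * b = b) :
    b * p = b :=
  (S.mul_eq_self_of_compl_sandwich_eq_zero hp hb (by rw [sub_mul, one_mul, h, sub_self,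
    zero_mul])).2

lemma mul_left_eq_self_of_mul_right_eq_self (hp : p ∈ S.P) (hb : b ∈ S.Ep) (h : b * p = b) :
    p * b = b :=
  (S.mul_eq_self_of_compl_sandwich_eq_zero hp hb (by rw [mul_assoc, mul_sub, mul_one, h,
    sub_self, mul_zero])).1

lemma mul_eq_self_of_le (hp : p ∈ S.P) (he : e ∈ S.Ep) (hle : S.le e p) :
    p * e = e ∧ e * p = e := by
  have hp' := S.mem_Ep_of_mem_P (S.one_sub_mem_P hp)
  have hneg : (1 - p) * (p - e) * (1 - p) = -((1 - p) * e * (1 - p)) := by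
    rw [mul_sub (1 - p) p e, sub_mul, (S.isIdempotentElem_of_mem_P hp).one_sub_mul_self,
      zero_mul, zero_sub]
  have hzero : (1 - p) * e * (1 - p) = 0 :=
    S.ax_i _ (S.ax_iv _ hp' e he) (hneg ▸ S.ax_iv _ hp' _ hle)
  exact S.mul_eq_self_of_compl_sandwich_eq_zero hp he hzero

lemma mul_mem_P_of_mul_eq_mul_mul (hp : p ∈ S.Ep) (hq : q ∈ S.P) (h : p * q = p * q * p) :
    p * q ∈ S.P := by
  refine ⟨S.mem_G_of_mem_Ep (h ▸ S.ax_iv p hp q (S.mem_Ep_of_mem_P hq)), ?_⟩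
  calc p * q * (p * q) = p * q * p * q := by noncomm_ring
    _ = p * q := by rw [← h, (S.isIdempotentElem_of_mem_P hq).mul_mul_self]

lemma sub_mem_P_of_mul_eq_self (hp : p ∈ S.P) (hq : q ∈ S.P) (h₁ : p * q = q)
    (h₂ : q * p = q) : p - q ∈ S.P := by
  refine ⟨S.sub_mem_G hp.1 hq.1, ?_⟩
  calc (p - q) * (p - q) = p * p - p * q - q * p + q * q := by noncomm_ring
    _ = p - q := by rw [hp.2, hq.2, h₁, h₂]; abel

lemma commute_of_mul_mem_Ep (hp : p ∈ S.P) (hq : q ∈ S.P) (h : p * q ∈ S.Ep) :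
    Commute p q := by
  have hp' := S.isIdempotentElem_of_mem_P hp
  have hq' := S.isIdempotentElem_of_mem_P hq
  have hpqp : p * q * p = p * q :=
    S.mul_right_eq_self_of_mul_left_eq_self hp h (hp'.mul_self_mul q)
  have hqpq : q * (p * q) = p * q :=
    S.mul_left_eq_self_of_mul_right_eq_self hq h (hq'.mul_mul_self p)
  have hpq : p * q ∈ S.P := S.mul_mem_P_of_mul_eq_mul_mul (S.mem_Ep_of_mem_P hp) hq hpqp.symm
  have ha : q - p * q ∈ S.P := S.sub_mem_P_of_mul_eq_self hq hpq hqpq (hq'.mul_mul_self p)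
  have hapa : (q - p * q) * p * (q - p * q) = 0 :=
    calc (q - p * q) * p * (q - p * q) = (q * p - p * q) * (q - p * q) := by rw [sub_mul, hpqp]
      _ = q * p * q - q * (p * p) * q - p * (q * q) + p * q * p * q := by noncomm_ring
      _ = 0 := by rw [hp'.eq, hq'.eq, hpqp, hq'.mul_mul_self]; abel
  have hap := (S.ax_v _ (S.mem_Ep_of_mem_P ha) p (S.mem_Ep_of_mem_P hp) hapa).1
  rw [sub_mul, hpqp, sub_eq_zero] at hap
  exact hap.symm

lemma mul_le_left_of_commute (hp : p ∈ S.P) (hq : q ∈ S.P) (h : Commute p q) :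
    S.le (p * q) p := by
  have hpqp : p * (1 - q) * p = p - p * q := by
    rw [mul_sub, mul_one, sub_mul, (S.isIdempotentElem_of_mem_P hp).eq, h.eq,
      (S.isIdempotentElem_of_mem_P hp).mul_mul_self]
  show p - p * q ∈ S.Ep
  rw [← hpqp]
  exact S.ax_iv p (S.mem_Ep_of_mem_P hp) _ (S.mem_Ep_of_mem_P (S.one_sub_mem_P hq))

lemma mul_le_right_of_commute (hp : p ∈ S.P) (hq : q ∈ S.P) (h : Commute p q) :
    S.le (p * q) q :=
  h.eq ▸ S.mul_le_left_of_commute hq hp h.symm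

lemma mul_mem_E_of_commute (hp : p ∈ S.P) (hq : q ∈ S.P) (h : Commute p q) : p * q ∈ S.E := by
  have hcompl : 1 - p * q = (1 - p) + (p - p * q) := by abel
  refine S.ax_ii _ (S.ax_iii p (S.mem_Ep_of_mem_P hp) q (S.mem_Ep_of_mem_P hq) h) ?_
  exact hcompl ▸
    S.add_mem_Ep (S.mem_Ep_of_mem_P (S.one_sub_mem_P hp)) (S.mul_le_left_of_commute hp hq h)

lemma le_mul_of_le_of_le (hp : p ∈ S.P) (h : Commute p q) (he : e ∈ S.Ep) (hle₁ : S.le e p)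
    (hle₂ : S.le e q) : S.le e (p * q) := by
  obtain ⟨hpe, hep⟩ := S.mul_eq_self_of_le hp he hle₁
  have hsandwich : p * (q - e) * p = p * q - e := by
    rw [mul_sub, sub_mul, hpe, hep, h.eq, mul_assoc, (S.isIdempotentElem_of_mem_P hp).eq]
  show p * q - e ∈ S.Ep
  rw [← hsandwich]
  exact S.ax_iv p (S.mem_Ep_of_mem_P hp) _ hle₂

end ERing

theorem stmt11 {R : Type*} [Ring R] (S : ERing R) :
    ∀ p ∈ S.P, ∀ q ∈ S.P,
      List.TFAE [p * q ∈ S.P, p * q ∈ S.E, p * q = q * p, p * q = p * q * p] ∧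
      (p * q = q * p →
        p * q ∈ S.E ∧ S.le (p * q) p ∧ S.le (p * q) q ∧
        ∀ e ∈ S.E, S.le e p → S.le e q → S.le e (p * q)) := by
  intro p hp q hq
  refine ⟨?_, fun h => ⟨S.mul_mem_E_of_commute hp hq h, S.mul_le_left_of_commute hp hq h,
    S.mul_le_right_of_commute hp hq h,
    fun e he => S.le_mul_of_le_of_le hp h (S.mem_Ep_of_mem_E he)⟩⟩
  tfae_have 1 → 2 := S.mem_E_of_mem_P
  tfae_have 2 → 3 := fun h => S.commute_of_mul_mem_Ep hp hq (S.mem_Ep_of_mem_E h)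
  tfae_have 3 → 2 := S.mul_mem_E_of_commute hp hq
  tfae_have 2 → 4 := fun h => (S.mul_right_eq_self_of_mul_left_eq_self hp (S.mem_Ep_of_mem_E h)
    ((S.isIdempotentElem_of_mem_P hp).mul_self_mul q)).symm
  tfae_have 4 → 1 := S.mul_mem_P_of_mul_eq_mul_mul (S.mem_Ep_of_mem_P hp) hq
  tfae_finish
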